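/- For the d-dimensional erasure channel E_p(ρ) = (1−p)ρ ⊕ p(Tr ρ)|e⟩⟨e| (output dimension d+1, with |e⟩ orthogonal to the input space), the optimal value of inf{ Tr V : J_{E_p} ≤ 1_A ⊗ V } equals d²(1−p) + p, hence S_{NS,0}(E_p) = ½ log₂(d²(1−p)+p). -/

import Mathlib

open Matrix Kronecker
open scoped ComplexOrder

noncomputable section

/-- The Loewner order: `A ≤ B` iff `B - A` is positive semidefinite. -/
def loe {n : Type*} [Fintype n] (A B : Matrix n n ℂ) : Prop := (B - A).PosSemidef

/-- The Choi–Jamiołkowski matrix `J_Φ = ∑_{i,j} |i⟩⟨j| ⊗ Φ(|i⟩⟨j|)` of a map `Φ`. -/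
def Choi {d₁ d₂ : Type*} [Fintype d₁] [DecidableEq d₁] [Fintype d₂] [DecidableEq d₂]
    (Φ : Matrix d₁ d₁ ℂ → Matrix d₂ d₂ ℂ) : Matrix (d₁ × d₂) (d₁ × d₂) ℂ :=
  ∑ i, ∑ j, (Matrix.single i j (1 : ℂ)) ⊗ₖ Φ (Matrix.single i j (1 : ℂ))

/-- SDP value `inf { Tr V : J ≤ 1_A ⊗ V }`, `V` Hermitian. -/
def sdpVal {a b : Type*} [Fintype a] [DecidableEq a] [Fintype b]
    (J : Matrix (a × b) (a × b) ℂ) : ℝ :=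
  sInf {r : ℝ | ∃ V : Matrix b b ℂ, V.IsHermitian ∧
    loe J ((1 : Matrix a a ℂ) ⊗ₖ V) ∧ r = (V.trace).re}

/-- The zero-error NS-assisted simulation cost `S_{NS,0} = ½ log₂ f(J)`. -/
def SNS0 {a b : Type*} [Fintype a] [DecidableEq a] [Fintype b]
    (J : Matrix (a × b) (a × b) ℂ) : ℝ :=
  (1 / 2) * Real.logb 2 (sdpVal J)


/-- Embedding of a `d × d` matrix into the top-left corner of a `(d+1) × (d+1)` matrix. -/
def embed (d : ℕ) (ρ : Matrix (Fin d) (Fin d) ℂ) : Matrix (Fin (d + 1)) (Fin (d + 1)) ℂ :=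
  fun i j => if h : i.1 < d ∧ j.1 < d then ρ ⟨i.1, h.1⟩ ⟨j.1, h.2⟩ else 0

/-- The `d`-dimensional erasure channel
`E_p(ρ) = (1-p) ρ ⊕ p (Tr ρ) |e⟩⟨e|`, with erasure flag `|e⟩ = |d⟩`
orthogonal to the input space. -/
def erasure (d : ℕ) (p : ℝ) (ρ : Matrix (Fin d) (Fin d) ℂ) :
    Matrix (Fin (d + 1)) (Fin (d + 1)) ℂ :=
  ((1 - p : ℝ) : ℂ) • embed d ρ +
    ((p : ℝ) : ℂ) • ρ.trace • Matrix.single (Fin.last d) (Fin.last d) (1 : ℂ)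

/- ### auxiliary lemmas -/

lemma Choi_apply' {d₁ d₂ : Type*} [Fintype d₁] [DecidableEq d₁] [Fintype d₂] [DecidableEq d₂]
    (Φ : Matrix d₁ d₁ ℂ → Matrix d₂ d₂ ℂ) (i j : d₁) (k l : d₂) :
    Choi Φ (i, k) (j, l) = Φ (Matrix.single i j 1) k l := by
  simp [Choi, Matrix.sum_apply, Matrix.kroneckerMap_apply, Matrix.single, ite_and]

/-- the maximally entangled (unnormalized) vector -/
def om (d : ℕ) : Fin d × Fin (d+1) → ℂ := fun q => if q.2 = q.1.castSucc then 1 else 0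

/-- indicator of the erasure flag -/
def ef (d : ℕ) : Fin d × Fin (d+1) → ℝ := fun q => if q.2 = Fin.last d then 1 else 0

lemma J_eq (d : ℕ) (p : ℝ) :
    Choi (erasure d p) = ((1 - p : ℝ) : ℂ) • Matrix.vecMulVec (om d) (star (om d)) +
      ((p : ℝ) : ℂ) • Matrix.diagonal (fun q : Fin d × Fin (d+1) => ((ef d q : ℝ) : ℂ)) := by
  ext ⟨i, k⟩ ⟨j, l⟩
  rw [Choi_apply']
  simp only [erasure, Matrix.add_apply, Matrix.smul_apply, Matrix.trace, Matrix.diag,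
    Matrix.single, Matrix.vecMulVec_apply, Pi.star_apply, om, ef, embed,
    Matrix.diagonal, Matrix.of_apply, smul_eq_mul, Matrix.smul_apply]
  have hi := i.2
  have hj := j.2
  have e2 : (∑ x : Fin d, if i = x ∧ j = x then (1:ℂ) else 0) = if i = j then 1 else 0 := by
    by_cases h : i = j
    · subst h; simp
    · rw [if_neg h]
      exact Finset.sum_eq_zero fun x _ => if_neg (by rintro ⟨rfl, rfl⟩; exact h rfl)
  rw [e2]
  congr 1
  · congr 1
    rw [show star (if l = j.castSucc then (1:ℂ) else 0) = (if l = j.castSucc then (1:ℂ) else 0) by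
      split_ifs <;> simp]
    simp only [Fin.ext_iff, Fin.coe_castSucc, Fin.val_mk]
    split_ifs
    all_goals try ring
    all_goals exfalso
    all_goals omega
  · congr 1
    by_cases h1 : i = j <;> by_cases h2 : k = Fin.last d <;> by_cases h3 : l = Fin.last d <;>
      simp [h1, h2, h3, Prod.ext_iff, eq_comm]

lemma quad_vmv {n : Type*} [Fintype n] (u x : n → ℂ) :
    star x ⬝ᵥ (Matrix.vecMulVec u (star u)) *ᵥ x
      = ((Complex.normSq (star u ⬝ᵥ x) : ℝ) : ℂ) := by
  have h : star x ⬝ᵥ (Matrix.vecMulVec u (star u)) *ᵥ x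
      = (∑ q, (starRingEnd ℂ) (x q) * u q) * (∑ r, (starRingEnd ℂ) (u r) * x r) := by
    rw [Finset.sum_mul_sum]
    simp only [dotProduct, Matrix.mulVec, Matrix.vecMulVec_apply, Pi.star_apply, dotProduct,
      Finset.mul_sum, RCLike.star_def]
    refine Finset.sum_congr rfl fun q _ => Finset.sum_congr rfl fun r _ => by ring
  rw [h]
  have h1 : (∑ r, (starRingEnd ℂ) (u r) * x r) = star u ⬝ᵥ x := by
    simp [dotProduct, RCLike.star_def]
  have h2 : (∑ q, (starRingEnd ℂ) (x q) * u q) = (starRingEnd ℂ) (star u ⬝ᵥ x) := by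
    simp only [dotProduct, map_sum, Pi.star_apply, RCLike.star_def, _root_.map_mul,
      Complex.conj_conj]
    exact Finset.sum_congr rfl fun q _ => (mul_comm _ _)
  rw [h1, h2, mul_comm, Complex.mul_conj]

lemma quad_diag {n : Type*} [Fintype n] [DecidableEq n] (f : n → ℝ) (x : n → ℂ) :
    star x ⬝ᵥ (Matrix.diagonal (fun q => ((f q : ℝ) : ℂ))) *ᵥ x
      = ((∑ q, f q * Complex.normSq (x q) : ℝ) : ℂ) := by
  push_cast
  simp only [dotProduct, Matrix.mulVec_diagonal, Pi.star_apply, RCLike.star_def]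
  refine Finset.sum_congr rfl fun q _ => ?_
  rw [show (starRingEnd ℂ) (x q) * (↑(f q) * x q) = ↑(f q) * (x q * (starRingEnd ℂ) (x q)) by ring,
    Complex.mul_conj]

lemma dot_kron {d : ℕ} (V : Matrix (Fin (d+1)) (Fin (d+1)) ℂ) (w x : Fin d × Fin (d+1) → ℂ) :
    star w ⬝ᵥ ((1 : Matrix (Fin d) (Fin d) ℂ) ⊗ₖ V) *ᵥ x
      = ∑ i : Fin d, ∑ k, ∑ l, (starRingEnd ℂ) (w (i,k)) * V k l * x (i,l) := by
  simp only [dotProduct, Matrix.mulVec, Fintype.sum_prod_type, Matrix.kroneckerMap_apply,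
    Matrix.one_apply, Pi.star_apply, RCLike.star_def, dotProduct]
  refine Finset.sum_congr rfl fun i _ => Finset.sum_congr rfl fun k _ => ?_
  simp only [Finset.mul_sum]
  rw [Finset.sum_comm]
  refine Finset.sum_congr rfl fun l _ => ?_
  simp [ite_mul, mul_ite, mul_zero, zero_mul, Finset.sum_ite_eq, mul_assoc]

/-- optimal dual variable (diagonal entries) -/
def vst (d : ℕ) (p : ℝ) : Fin (d+1) → ℝ := fun k => if k = Fin.last d then p else d*(1-p)

def Vstar (d : ℕ) (p : ℝ) : Matrix (Fin (d+1)) (Fin (d+1)) ℂ :=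
  Matrix.diagonal (fun k => ((vst d p k : ℝ) : ℂ))

lemma Vstar_herm (d : ℕ) (p : ℝ) : (Vstar d p).IsHermitian := by
  apply Matrix.isHermitian_diagonal_of_self_adjoint
  funext k
  exact Complex.conj_ofReal _

lemma kron_Vstar (d : ℕ) (p : ℝ) :
    (1 : Matrix (Fin d) (Fin d) ℂ) ⊗ₖ Vstar d p
      = Matrix.diagonal (fun q : Fin d × Fin (d+1) => ((vst d p q.2 : ℝ) : ℂ)) := by
  rw [Vstar, show (1 : Matrix (Fin d) (Fin d) ℂ) = Matrix.diagonal (fun _ => (1:ℂ)) by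
    simp [Matrix.diagonal_one], Matrix.diagonal_kronecker_diagonal]
  simp

lemma M_eq (d : ℕ) (p : ℝ) :
    (1 : Matrix (Fin d) (Fin d) ℂ) ⊗ₖ Vstar d p - Choi (erasure d p)
      = ((1 - p : ℝ) : ℂ) •
        (Matrix.diagonal (fun q : Fin d × Fin (d+1) => (((d : ℝ) * (1 - ef d q) : ℝ) : ℂ))
          - Matrix.vecMulVec (om d) (star (om d))) := by
  rw [kron_Vstar, J_eq]
  ext q r
  by_cases h : q = r
  · subst h
    simp only [Matrix.sub_apply, Matrix.add_apply, Matrix.smul_apply, Matrix.diagonal_apply_eq,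
      Matrix.vecMulVec_apply, smul_eq_mul]
    by_cases h2 : q.2 = Fin.last d
    · have hom : om d q = 0 := by
        simp only [om, h2]
        rw [if_neg]
        intro hc
        have hv := q.1.2
        simp only [Fin.ext_iff, Fin.coe_castSucc, Fin.val_last] at hc h2
        omega
      simp [vst, ef, h2, hom]
    · have hef : ef d q = 0 := by simp [ef, h2]
      simp only [vst, ef, if_neg h2, hef]
      push_cast
      ring
  · simp only [Matrix.sub_apply, Matrix.add_apply, Matrix.smul_apply,
      Matrix.diagonal_apply_ne _ h, Matrix.vecMulVec_apply, smul_eq_mul]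
    ring

lemma vmv_herm {n : Type*} [Fintype n] (u : n → ℂ) :
    (Matrix.vecMulVec u (star u)).IsHermitian := by
  show _ = _
  ext q r
  simp only [Matrix.conjTranspose_apply, Matrix.vecMulVec_apply, Pi.star_apply, star_mul',
    star_star]
  ring

lemma om_dot (d : ℕ) (x : Fin d × Fin (d+1) → ℂ) :
    star (om d) ⬝ᵥ x = ∑ i : Fin d, x (i, i.castSucc) := by
  simp only [dotProduct, om, Fintype.sum_prod_type, Pi.star_apply, RCLike.star_def,
    apply_ite (starRingEnd ℂ), _root_.map_one, _root_.map_zero, ite_mul, one_mul, zero_mul]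
  exact Finset.sum_congr rfl fun i _ => by
    rw [Finset.sum_ite_eq' Finset.univ (Fin.castSucc i) (fun k => x (i, k))]
    simp

lemma key_ineq (d : ℕ) (x : Fin d × Fin (d+1) → ℂ) :
    Complex.normSq (star (om d) ⬝ᵥ x)
      ≤ ∑ q : Fin d × Fin (d+1), (d : ℝ) * (1 - ef d q) * Complex.normSq (x q) := by
  have h0 : ∀ q, (0:ℝ) ≤ 1 - ef d q := by
    intro q; unfold ef; split_ifs <;> norm_num
  rw [om_dot]
  have s1 : Complex.normSq (∑ i : Fin d, x (i, i.castSucc))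
      ≤ (d:ℝ) * ∑ i : Fin d, Complex.normSq (x (i, i.castSucc)) := by
    rw [← Complex.sq_norm]
    have h1 : ‖∑ i : Fin d, x (i, i.castSucc)‖
        ≤ ∑ i : Fin d, ‖x (i, i.castSucc)‖ := by
      simpa using norm_sum_le Finset.univ (fun i : Fin d => x (i, i.castSucc))
    have h2 : ‖∑ i : Fin d, x (i, i.castSucc)‖ ^ 2
        ≤ (∑ i : Fin d, ‖x (i, i.castSucc)‖) ^ 2 := by
      apply pow_le_pow_left₀ (by positivity) h1
    have h3 : (∑ i : Fin d, ‖x (i, i.castSucc)‖) ^ 2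
        ≤ ((Finset.univ : Finset (Fin d)).card : ℝ)
          * ∑ i : Fin d, ‖x (i, i.castSucc)‖ ^ 2 := sq_sum_le_card_mul_sum_sq
    have h4 : ((Finset.univ : Finset (Fin d)).card : ℝ)
          * ∑ i : Fin d, ‖x (i, i.castSucc)‖ ^ 2
        = (d:ℝ) * ∑ i : Fin d, Complex.normSq (x (i, i.castSucc)) := by
      simp [Complex.sq_norm]
    linarith
  have s2 : ∑ i : Fin d, Complex.normSq (x (i, i.castSucc))
      ≤ ∑ q : Fin d × Fin (d+1), (1 - ef d q) * Complex.normSq (x q) := by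
    rw [Fintype.sum_prod_type]
    apply Finset.sum_le_sum
    intro i _
    have hne : (Fin.castSucc i) ≠ Fin.last d := (Fin.castSucc_lt_last i).ne
    have he : (1 - ef d (i, i.castSucc)) * Complex.normSq (x (i, i.castSucc))
        = Complex.normSq (x (i, i.castSucc)) := by simp [ef, hne]
    rw [← he]
    exact Finset.single_le_sum (f := fun k => (1 - ef d (i, k)) * Complex.normSq (x (i, k)))
      (fun k _ => mul_nonneg (h0 _) (Complex.normSq_nonneg _)) (Finset.mem_univ _)
  have s3 : ∑ q : Fin d × Fin (d+1), (d : ℝ) * (1 - ef d q) * Complex.normSq (x q)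
      = (d:ℝ) * ∑ q : Fin d × Fin (d+1), (1 - ef d q) * Complex.normSq (x q) := by
    rw [Finset.mul_sum]; exact Finset.sum_congr rfl fun q _ => by ring
  rw [s3]
  have := mul_le_mul_of_nonneg_left s2 (Nat.cast_nonneg d : (0:ℝ) ≤ d)
  linarith

lemma M_psd (d : ℕ) (p : ℝ) (hp1 : p ≤ 1) :
    ((1 : Matrix (Fin d) (Fin d) ℂ) ⊗ₖ Vstar d p - Choi (erasure d p)).PosSemidef := by
  rw [M_eq]
  have hB : (Matrix.diagonal (fun q : Fin d × Fin (d+1) => (((d : ℝ) * (1 - ef d q) : ℝ) : ℂ))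
      - Matrix.vecMulVec (om d) (star (om d))).IsHermitian :=
    Matrix.IsHermitian.sub
      (Matrix.isHermitian_diagonal_of_self_adjoint _ (funext fun q => Complex.conj_ofReal _))
      (vmv_herm _)
  refine Matrix.PosSemidef.of_dotProduct_mulVec_nonneg ?_ ?_
  · show _ = _
    rw [Matrix.conjTranspose_smul, hB.eq]
    congr 1
    exact Complex.conj_ofReal _
  · intro x
    rw [smul_mulVec, dotProduct_smul, Matrix.sub_mulVec, dotProduct_sub, quad_vmv,
      quad_diag]
    rw [show ((1 - p : ℝ):ℂ) • ((((∑ q : Fin d × Fin (d+1),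
          ((d : ℝ) * (1 - ef d q)) * Complex.normSq (x q)) : ℝ):ℂ)
          - ((Complex.normSq (star (om d) ⬝ᵥ x) : ℝ) : ℂ))
        = (((1-p) * ((∑ q : Fin d × Fin (d+1), (d:ℝ) * (1 - ef d q) * Complex.normSq (x q))
            - Complex.normSq (star (om d) ⬝ᵥ x)) : ℝ) : ℂ) by simp only [smul_eq_mul]; push_cast; ring]
    rw [Complex.zero_le_real]
    have := key_ineq d x
    nlinarith

lemma Vstar_trace (d : ℕ) (p : ℝ) :
    (Vstar d p).trace = (((d:ℝ)^2*(1-p) + p : ℝ) : ℂ) := by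
  rw [Vstar, Matrix.trace_diagonal, Fin.sum_univ_castSucc]
  simp only [vst, (Fin.castSucc_lt_last _).ne, if_false, if_true, Finset.sum_const,
    Finset.card_univ, Fintype.card_fin, nsmul_eq_mul]
  push_cast
  ring

lemma quadJ (d : ℕ) (p : ℝ) (w : Fin d × Fin (d+1) → ℂ) :
    star w ⬝ᵥ (Choi (erasure d p)) *ᵥ w
      = (((1-p) * Complex.normSq (star (om d) ⬝ᵥ w)
          + p * ∑ q : Fin d × Fin (d+1), ef d q * Complex.normSq (w q) : ℝ) : ℂ) := by
  rw [J_eq, Matrix.add_mulVec, smul_mulVec, smul_mulVec, dotProduct_add,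
    dotProduct_smul, dotProduct_smul, quad_vmv, quad_diag]
  simp only [smul_eq_mul]
  push_cast
  ring

lemma lower_bound (d : ℕ) (hd : 0 < d) (p : ℝ) (V : Matrix (Fin (d+1)) (Fin (d+1)) ℂ)
    (hpsd : ((1 : Matrix (Fin d) (Fin d) ℂ) ⊗ₖ V - Choi (erasure d p)).PosSemidef) :
    (d:ℝ)^2*(1-p) + p ≤ V.trace.re := by
  have key : ∀ w, (star w ⬝ᵥ (Choi (erasure d p)) *ᵥ w).re
      ≤ (star w ⬝ᵥ ((1 : Matrix (Fin d) (Fin d) ℂ) ⊗ₖ V) *ᵥ w).re := by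
    intro w
    have h := hpsd.dotProduct_mulVec_nonneg w
    rw [Matrix.sub_mulVec, dotProduct_sub] at h
    have h2 := (Complex.le_def.mp h).1
    simp only [Complex.sub_re, Complex.zero_re] at h2
    linarith
  -- (a) the maximally entangled vector
  have hc : star (om d) ⬝ᵥ (om d) = ((d:ℝ) : ℂ) := by
    rw [om_dot]; simp [om]
  have hJom : (star (om d) ⬝ᵥ (Choi (erasure d p)) *ᵥ (om d)).re = (1-p) * (d:ℝ)^2 := by
    rw [quadJ, Complex.ofReal_re, hc]
    have hz : ∀ q : Fin d × Fin (d+1), ef d q * Complex.normSq (om d q) = 0 := by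
      intro q
      by_cases h2 : q.2 = Fin.last d
      · have hom : om d q = 0 := by
          simp only [om]
          rw [if_neg]
          intro hcc
          have hv := q.1.2
          simp only [Fin.ext_iff, Fin.coe_castSucc, Fin.val_last] at hcc h2
          omega
        simp [hom]
      · simp [ef, h2]
    rw [Finset.sum_eq_zero fun q _ => hz q, Complex.normSq_ofReal]
    ring
  have hVom : star (om d) ⬝ᵥ ((1 : Matrix (Fin d) (Fin d) ℂ) ⊗ₖ V) *ᵥ (om d)
      = ∑ i : Fin d, V i.castSucc i.castSucc := by
    rw [dot_kron]
    refine Finset.sum_congr rfl fun i _ => ?_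
    simp [om, apply_ite (starRingEnd ℂ), _root_.map_one, _root_.map_zero, ite_mul, mul_ite,
      mul_zero, zero_mul, Finset.sum_ite_eq', Finset.sum_ite_eq]
  -- (b) the erasure-flag vector
  set i0 : Fin d := ⟨0, hd⟩ with hi0
  set e0 : Fin d × Fin (d+1) → ℂ :=
    fun q => (if q.1 = i0 then 1 else 0) * (if q.2 = Fin.last d then 1 else 0) with he0
  have hce : star (om d) ⬝ᵥ e0 = 0 := by
    rw [om_dot]
    refine Finset.sum_eq_zero fun i _ => ?_
    have hne : (Fin.castSucc i) ≠ Fin.last d := (Fin.castSucc_lt_last i).ne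
    simp [he0, hne]
  have hJe : (star e0 ⬝ᵥ (Choi (erasure d p)) *ᵥ e0).re = p := by
    rw [quadJ, Complex.ofReal_re, hce]
    have : ∑ q : Fin d × Fin (d+1), ef d q * Complex.normSq (e0 q) = 1 := by
      rw [Fintype.sum_prod_type]
      rw [Finset.sum_eq_single i0]
      · rw [Finset.sum_eq_single (Fin.last d)]
        · simp [he0, ef]
        · intro k _ hk; simp [he0, ef, hk]
        · simp
      · intro i _ hi; refine Finset.sum_eq_zero fun k _ => ?_; simp [he0, hi]
      · simp
    rw [this]
    simp
  have hVe : star e0 ⬝ᵥ ((1 : Matrix (Fin d) (Fin d) ℂ) ⊗ₖ V) *ᵥ e0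
      = V (Fin.last d) (Fin.last d) := by
    rw [dot_kron]
    rw [Finset.sum_eq_single i0]
    · rw [Finset.sum_eq_single (Fin.last d)]
      · rw [Finset.sum_eq_single (Fin.last d)]
        · simp [he0]
        · intro l _ hl; simp [he0, hl]
        · simp
      · intro k _ hk
        refine Finset.sum_eq_zero fun l _ => ?_
        simp [he0, hk]
      · simp
    · intro i _ hi
      refine Finset.sum_eq_zero fun k _ => Finset.sum_eq_zero fun l _ => ?_
      simp [he0, hi]
    · simp
  -- combine
  have ha := key (om d)
  rw [hJom, hVom] at ha
  have hb := key e0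
  rw [hJe, hVe] at hb
  have htr : V.trace.re = ∑ i : Fin d, (V i.castSucc i.castSucc).re
      + (V (Fin.last d) (Fin.last d)).re := by
    rw [Matrix.trace, Complex.re_sum, Fin.sum_univ_castSucc]
    rfl
  have hre : (∑ i : Fin d, V i.castSucc i.castSucc).re
      = ∑ i : Fin d, (V i.castSucc i.castSucc).re := Complex.re_sum _ _
  rw [hre] at ha
  rw [htr]
  linarith

/-- The SDP value for the erasure channel equals `d²(1-p) + p`, hence
`S_{NS,0}(E_p) = ½ log₂ (d²(1-p)+p)`. -/
theorem stmt_10 (d : ℕ) (hd : 0 < d) (p : ℝ) (hp0 : 0 ≤ p) (hp1 : p ≤ 1) :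
    sdpVal (Choi (erasure d p)) = d ^ 2 * (1 - p) + p ∧
    SNS0 (Choi (erasure d p)) = (1 / 2) * Real.logb 2 (d ^ 2 * (1 - p) + p) := by
  have hmem : ((d:ℝ)^2*(1-p) + p) ∈ {r : ℝ | ∃ V : Matrix (Fin (d+1)) (Fin (d+1)) ℂ,
      V.IsHermitian ∧ loe (Choi (erasure d p)) ((1 : Matrix (Fin d) (Fin d) ℂ) ⊗ₖ V) ∧
      r = (V.trace).re} := by
    refine ⟨Vstar d p, Vstar_herm d p, M_psd d p hp1, ?_⟩
    rw [Vstar_trace, Complex.ofReal_re]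
  have hlb : ∀ r ∈ {r : ℝ | ∃ V : Matrix (Fin (d+1)) (Fin (d+1)) ℂ,
      V.IsHermitian ∧ loe (Choi (erasure d p)) ((1 : Matrix (Fin d) (Fin d) ℂ) ⊗ₖ V) ∧
      r = (V.trace).re}, (d:ℝ)^2*(1-p) + p ≤ r := by
    rintro r ⟨V, hherm, hloe, rfl⟩
    exact lower_bound d hd p V hloe
  have hval : sdpVal (Choi (erasure d p)) = (d:ℝ)^2*(1-p) + p := by
    unfold sdpVal
    exact le_antisymm (csInf_le ⟨_, fun r hr => hlb r hr⟩ hmem) (le_csInf ⟨_, hmem⟩ hlb)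
  constructor
  · rw [hval]
  · unfold SNS0
    rw [hval]

end
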